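/- Let p ≥ 1 be an integer, 0 < r ≤ 2, and let e be a real random variable with E(|e|^r) < ∞, P(e = 0) = 0 and P(e ≠ 0) = 1 not degenerate (i.e. e is not almost surely 0). Set p₁ = P(e < 0), p₂ = P(e > 0), E₁ = E(|e|^r 1_{e<0}), E₂ = E(|e|^r 1_{e>0}). Let b_{ji} > 0 for j = 1,2 and i = 1,…,p, and define b*(x) = (Σ_{i=1}^p b_{1i}² x_i²)^{1/2} if x₁ ≤ 0 and b*(x) = (Σ_{i=1}^p b_{2i}² x_i²)^{1/2} if x₁ > 0. Suppose b_{11}^r E₁ + b_{21}^r E₂ + Σ_{i=2}^p (b_{1i}^r p₁ + b_{2i}^r p₂) E(|e|^r) < 1. Then there exist β ∈ (0,1) and positive constants d_{ji} (j = 1,2; i = 1,…,p) such that, with V(x) = Σ_{i=1}^p d_{1i}|x_i|^r for x₁ ≤ 0 and V(x) = Σ_{i=1}^p d_{2i}|x_i|^r for x₁ > 0, one has E(V(b*(x)e, x₁, …, x_{p−1})) ≤ β V(x) for every x = (x₁,…,x_p) ∈ ℝ^p. -/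

import Mathlib

/-!
Given `x`, the new first coordinate `b*(x) e` lies in the regime of `e`, and since `r / 2 ≤ 1`,
`b*(x)^r ≤ ∑ᵢ b_{j,i}^r |xᵢ|^r` in the regime `j` of `x`. Hence `E V(b*(x) e, x₁, …, x_{p-1})` is
at most `(d₁₁ E₁ + d₂₁ E₂) ∑ᵢ b_{j,i}^r |xᵢ|^r + ∑_{i<p} (p₁ d_{1,i+1} + p₂ d_{2,i+1}) |xᵢ|^r`.
Solving `β d_{j,i} = b_{j,i}^r + p₁ d_{1,i+1} + p₂ d_{2,i+1}` backwards from `d_{j,p+1} = 0`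
turns this into `≤ β V(x)` as soon as `d₁₁ E₁ + d₂₁ E₂ ≤ 1`. Unrolling the recursion bounds
`d₁₁ E₁ + d₂₁ E₂` by `S / β^p`, where `S < 1` is the left side of the hypothesis, so any `β < 1`
with `S < β^p` works.
-/
open MeasureTheory Finset Filter Topology

theorem Real.rpow_sum_le_sum_rpow {ι : Type*} (s : Finset ι) {f : ι → ℝ} (hf : ∀ i ∈ s, 0 ≤ f i)
    {t : ℝ} (ht0 : 0 < t) (ht1 : t ≤ 1) : (∑ i ∈ s, f i) ^ t ≤ ∑ i ∈ s, f i ^ t :=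
  Finset.le_sum_of_subadditive_on_pred (fun x : ℝ => x ^ t) (0 ≤ ·)
    (Real.zero_rpow ht0.ne').le (fun _ _ hx hy => Real.rpow_add_le_add_rpow hx hy ht0.le ht1)
    (fun _ _ => add_nonneg) f hf

theorem Real.sqrt_sum_mul_sq_rpow_le {ι : Type*} (s : Finset ι) {c : ι → ℝ} (hc : ∀ i ∈ s, 0 ≤ c i)
    (x : ι → ℝ) {r : ℝ} (hr0 : 0 < r) (hr2 : r ≤ 2) :
    √(∑ i ∈ s, c i ^ 2 * x i ^ 2) ^ r ≤ ∑ i ∈ s, c i ^ r * |x i| ^ r := by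
  have hsq : ∀ i ∈ s, c i ^ 2 * x i ^ 2 = (c i * |x i|) ^ (2 : ℝ) := fun i _ => by
    rw [Real.rpow_two, mul_pow, sq_abs]
  rw [Real.sqrt_eq_rpow, ← Real.rpow_mul (by positivity), Finset.sum_congr rfl hsq]
  calc (∑ i ∈ s, (c i * |x i|) ^ (2 : ℝ)) ^ (1 / 2 * r)
      ≤ ∑ i ∈ s, ((c i * |x i|) ^ (2 : ℝ)) ^ (1 / 2 * r) :=
        Real.rpow_sum_le_sum_rpow s (fun i hi => Real.rpow_nonneg (mul_nonneg (hc i hi)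
          (abs_nonneg _)) _) (by positivity) (by linarith)
    _ = ∑ i ∈ s, c i ^ r * |x i| ^ r := Finset.sum_congr rfl fun i hi => by
        rw [← Real.rpow_mul (mul_nonneg (hc i hi) (abs_nonneg _)),
          Real.mul_rpow (hc i hi) (abs_nonneg _), show 2 * (1 / 2 * r) = r by ring]

theorem eq_zero_of_sqrt_sum_mul_sq_eq_zero {ι : Type*} [Fintype ι] {c x : ι → ℝ}
    (hc : ∀ i, c i ≠ 0) (h : √(∑ i, c i ^ 2 * x i ^ 2) = 0) : x = 0 := by
  have hsum := le_antisymm (Real.sqrt_eq_zero'.1 h) (by positivity)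
  funext i
  simpa [hc i] using (Finset.sum_eq_zero_iff_of_nonneg (fun i _ => by positivity)).1 hsum i
    (Finset.mem_univ i)

theorem exists_pos_lt_one_lt_pow {S : ℝ} (hS : S < 1) (k : ℕ) :
    ∃ β : ℝ, 0 < β ∧ β < 1 ∧ S < β ^ k := by
  have hlim : Tendsto (fun β : ℝ => β ^ k) (𝓝[<] 1) (𝓝 1) := by
    simpa using ((continuous_pow k).tendsto (1 : ℝ)).mono_left nhdsWithin_le_nhds
  obtain ⟨β, hSβ, hβ⟩ :=
    ((hlim.eventually (lt_mem_nhds hS)).and (Ioo_mem_nhdsLT zero_lt_one)).exists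
  exact ⟨β, hβ.1, hβ.2, hSβ⟩

/-- `tailWeights β n a i = ∑_{i ≤ k < n} a k / β ^ (k - i + 1)`: the solution of the backward
recursion `w i = (a i + w (i + 1)) / β`, `w n = 0`. -/
noncomputable def tailWeights (β : ℝ) : (n : ℕ) → (Fin n → ℝ) → Fin (n + 1) → ℝ
  | 0, _ => 0
  | n + 1, a => Fin.cons ((a 0 + tailWeights β n (Fin.tail a) 0) / β) (tailWeights β n (Fin.tail a))

section tailWeights

variable {β : ℝ}

theorem tailWeights_castSucc {n : ℕ} (a : Fin n → ℝ) (i : Fin n) :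
    tailWeights β n a i.castSucc = (a i + tailWeights β n a i.succ) / β := by
  induction n with
  | zero => exact i.elim0
  | succ n ih =>
    induction i using Fin.cases with
    | zero => rfl
    | succ i =>
      rw [← Fin.succ_castSucc]
      simp only [tailWeights, Fin.cons_succ]
      exact ih (Fin.tail a) i

@[simp]
theorem tailWeights_last {n : ℕ} (a : Fin n → ℝ) : tailWeights β n a (Fin.last n) = 0 := by
  induction n with
  | zero => rfl
  | succ n ih => exact ih (Fin.tail a)

theorem tailWeights_nonneg (hβ : 0 < β) {n : ℕ} {a : Fin n → ℝ} (ha : ∀ i, 0 ≤ a i)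
    (i : Fin (n + 1)) : 0 ≤ tailWeights β n a i := by
  induction n with
  | zero => exact le_rfl
  | succ n ih =>
    have ih' := ih (a := Fin.tail a) fun i => ha i.succ
    induction i using Fin.cases with
    | zero => exact div_nonneg (add_nonneg (ha 0) (ih' 0)) hβ.le
    | succ i => exact ih' i

theorem tailWeights_zero_le (hβ0 : 0 < β) (hβ1 : β ≤ 1) {n : ℕ} {a : Fin n → ℝ}
    (ha : ∀ i, 0 ≤ a i) : tailWeights β n a 0 ≤ (∑ i, a i) / β ^ n := by
  induction n with
  | zero => simp [tailWeights]
  | succ n ih =>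
    have ih' := ih (a := Fin.tail a) fun i => ha i.succ
    calc tailWeights β (n + 1) a 0 = (a 0 + tailWeights β n (Fin.tail a) 0) / β := rfl
      _ ≤ (a 0 / β ^ n + (∑ i, Fin.tail a i) / β ^ n) / β := by
          gcongr
          exact le_div_self (ha 0) (by positivity) (pow_le_one₀ hβ0.le hβ1)
      _ = (∑ i, a i) / β ^ (n + 1) := by
          rw [Fin.sum_univ_succ, pow_succ, ← add_div, div_div]
          rfl

end tailWeights

section driftWeights

variable {n : ℕ} (β p₁ p₂ : ℝ) (a : Fin 2 → Fin (n + 1) → ℝ)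

/-- When `p₁ + p₂ = 1`, these weights solve `β d j i = a j i + p₁ d 0 (i + 1) + p₂ d 1 (i + 1)`
backwards from `d · (n + 1) = 0`. -/
noncomputable def driftWeights : Fin 2 → Fin (n + 1) → ℝ := fun j i =>
  (a j i + tailWeights β n (fun k => a 0 k.succ * p₁ + a 1 k.succ * p₂) i) / β

variable {β p₁ p₂ a}

theorem driftWeights_pos (hβ : 0 < β) (ha : ∀ j i, 0 < a j i) (hp₁ : 0 ≤ p₁) (hp₂ : 0 ≤ p₂)
    (j : Fin 2) (i : Fin (n + 1)) : 0 < driftWeights β p₁ p₂ a j i :=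
  div_pos (add_pos_of_pos_of_nonneg (ha j i) (tailWeights_nonneg hβ
    (fun k => by have := ha 0 k.succ; have := ha 1 k.succ; positivity) i)) hβ

theorem driftWeights_succ_average (hp : p₁ + p₂ = 1) (i : Fin n) :
    p₁ * driftWeights β p₁ p₂ a 0 i.succ + p₂ * driftWeights β p₁ p₂ a 1 i.succ
      = tailWeights β n (fun k => a 0 k.succ * p₁ + a 1 k.succ * p₂) i.castSucc := by
  rw [tailWeights_castSucc]
  simp only [driftWeights]
  linear_combination tailWeights β n (fun k => a 0 k.succ * p₁ + a 1 k.succ * p₂) i.succ / β * hp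

theorem driftWeights_zero_average_le_one (hβ0 : 0 < β) (hβ1 : β ≤ 1) (ha : ∀ j i, 0 ≤ a j i)
    (hp₁ : 0 ≤ p₁) (hp₂ : 0 ≤ p₂) {E₁ E₂ : ℝ} (hE₁ : 0 ≤ E₁) (hE₂ : 0 ≤ E₂)
    (hS : a 0 0 * E₁ + a 1 0 * E₂
      + ∑ k : Fin n, (a 0 k.succ * p₁ + a 1 k.succ * p₂) * (E₁ + E₂) ≤ β ^ (n + 1)) :
    driftWeights β p₁ p₂ a 0 0 * E₁ + driftWeights β p₁ p₂ a 1 0 * E₂ ≤ 1 := by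
  set w := tailWeights β n (fun k => a 0 k.succ * p₁ + a 1 k.succ * p₂)
  have hw : w 0 ≤ (∑ k : Fin n, (a 0 k.succ * p₁ + a 1 k.succ * p₂)) / β ^ n :=
    tailWeights_zero_le hβ0 hβ1 fun k => by
      have := ha 0 k.succ; have := ha 1 k.succ; positivity
  have hA : 0 ≤ a 0 0 * E₁ + a 1 0 * E₂ := by have := ha 0 0; have := ha 1 0; positivity
  rw [← Finset.sum_mul] at hS
  calc driftWeights β p₁ p₂ a 0 0 * E₁ + driftWeights β p₁ p₂ a 1 0 * E₂
      = (a 0 0 * E₁ + a 1 0 * E₂ + w 0 * (E₁ + E₂)) / β := by simp only [driftWeights]; ring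
    _ ≤ ((a 0 0 * E₁ + a 1 0 * E₂) / β ^ n
          + (∑ k : Fin n, (a 0 k.succ * p₁ + a 1 k.succ * p₂)) / β ^ n * (E₁ + E₂)) / β := by
        gcongr
        exact le_div_self hA (by positivity) (pow_le_one₀ hβ0.le hβ1)
    _ = (a 0 0 * E₁ + a 1 0 * E₂
          + (∑ k : Fin n, (a 0 k.succ * p₁ + a 1 k.succ * p₂)) * (E₁ + E₂)) / β ^ (n + 1) := by
        rw [pow_succ, ← div_div, div_mul_eq_mul_div, ← add_div]
    _ ≤ 1 := div_le_one_of_le₀ hS (by positivity)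

/-- `t` stands for `b*(x)^r` and `c` for the mixed moment `d₁₁ E₁ + d₂₁ E₂` of the new first
coordinate. -/
theorem drift_le (hβ : β ≠ 0) (hp : p₁ + p₂ = 1) {v : Fin (n + 1) → ℝ}
    (j : Fin 2) {t c : ℝ} (ht0 : 0 ≤ t) (ht : t ≤ ∑ i, a j i * v i) (hc : c ≤ 1) :
    t * c + ∑ i : Fin n, (p₁ * driftWeights β p₁ p₂ a 0 i.succ
        + p₂ * driftWeights β p₁ p₂ a 1 i.succ) * v i.castSucc
      ≤ β * ∑ i, driftWeights β p₁ p₂ a j i * v i := by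
  set w := tailWeights β n (fun k => a 0 k.succ * p₁ + a 1 k.succ * p₂)
  have hw : ∑ i : Fin n, w i.castSucc * v i.castSucc = ∑ i, w i * v i := by
    simp [Fin.sum_univ_castSucc (fun i => w i * v i), w]
  calc t * c + ∑ i : Fin n, (p₁ * driftWeights β p₁ p₂ a 0 i.succ
        + p₂ * driftWeights β p₁ p₂ a 1 i.succ) * v i.castSucc
      = t * c + ∑ i : Fin n, w i.castSucc * v i.castSucc := by
        simp only [driftWeights_succ_average hp, w]
    _ ≤ ∑ i, a j i * v i + ∑ i, w i * v i :=
        add_le_add ((mul_le_of_le_one_right ht0 hc).trans ht) hw.le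
    _ = β * ∑ i, driftWeights β p₁ p₂ a j i * v i := by
        rw [Finset.mul_sum, ← Finset.sum_add_distrib]
        refine Finset.sum_congr rfl fun i _ => ?_
        rw [← mul_assoc, driftWeights, mul_div_cancel₀ _ hβ, add_mul]

end driftWeights

/-- The paper's regime index `j ∈ {1, 2}`, shifted to `Fin 2`. -/
noncomputable def regime (t : ℝ) : Fin 2 := if t ≤ 0 then 0 else 1

theorem regime_mul_of_pos {s : ℝ} (hs : 0 < s) (t : ℝ) : regime (s * t) = regime t := by
  have h : s * t ≤ 0 ↔ t ≤ 0 := by constructor <;> intro h <;> nlinarith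
  simp only [regime, h]

noncomputable def switchingLyapunov {n : ℕ} (d : Fin 2 → Fin (n + 1) → ℝ) (r : ℝ)
    (x : Fin (n + 1) → ℝ) : ℝ :=
  ∑ i, d (regime (x 0)) i * |x i| ^ r

section integral

variable {Ω : Type*} [MeasurableSpace Ω] {μ : Measure Ω} {e : Ω → ℝ}

theorem integral_comp_regime (he : Measurable e) (h0 : μ {ω | e ω = 0} = 0)
    {g : Fin 2 → Ω → ℝ} (hg : ∀ j, Integrable (g j) μ) :
    ∫ ω, g (regime (e ω)) ω ∂μ
      = ∫ ω in {ω | e ω < 0}, g 0 ω ∂μ + ∫ ω in {ω | 0 < e ω}, g 1 ω ∂μ := by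
  have hae : {ω | e ω ≤ 0} =ᵐ[μ] {ω | e ω < 0} := by
    filter_upwards [measure_eq_zero_iff_ae_notMem.1 h0] with ω (hω : e ω ≠ 0)
    exact propext ⟨fun h => h.lt_of_ne hω, le_of_lt⟩
  have hcompl : {ω | e ω ≤ 0}ᶜ = {ω | 0 < e ω} := by ext; simp
  rw [← setIntegral_congr_set hae, ← hcompl,
    ← integral_piecewise (measurableSet_le he measurable_const) (hg 0).integrableOn
      (hg 1).integrableOn]
  congr 1 with ω
  by_cases h : e ω ≤ 0 <;> simp [regime, h]

theorem integral_switchingLyapunov_cons [IsFiniteMeasure μ] (he : Measurable e)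
    (h0 : μ {ω | e ω = 0} = 0) {r : ℝ} (hmom : Integrable (fun ω => |e ω| ^ r) μ) {n : ℕ}
    (d : Fin 2 → Fin (n + 1) → ℝ) (y : Fin n → ℝ) {s : ℝ} (hs : 0 < s) :
    ∫ ω, switchingLyapunov d r (Fin.cons (s * e ω) y) ∂μ
      = s ^ r * (d 0 0 * ∫ ω in {ω | e ω < 0}, |e ω| ^ r ∂μ
          + d 1 0 * ∫ ω in {ω | 0 < e ω}, |e ω| ^ r ∂μ)
        + ∑ i : Fin n, (μ.real {ω | e ω < 0} * d 0 i.succ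
          + μ.real {ω | 0 < e ω} * d 1 i.succ) * |y i| ^ r := by
  set g : Fin 2 → Ω → ℝ := fun j ω => d j 0 * s ^ r * |e ω| ^ r + ∑ i, d j i.succ * |y i| ^ r
  have hg : ∀ ω, switchingLyapunov d r (Fin.cons (s * e ω) y) = g (regime (e ω)) ω := by
    intro ω
    simp only [switchingLyapunov, Fin.sum_univ_succ, Fin.cons_zero, Fin.cons_succ,
      regime_mul_of_pos hs, abs_mul, abs_of_pos hs, Real.mul_rpow hs.le (abs_nonneg _), g]
    ring
  simp_rw [hg]
  rw [integral_comp_regime (g := g) he h0 fun j => (hmom.const_mul _).add (integrable_const _)]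
  simp only [g, integral_add (hmom.const_mul _).integrableOn (integrable_const _).integrableOn,
    integral_const_mul, setIntegral_const, smul_eq_mul, Finset.mul_sum, add_mul,
    Finset.sum_add_distrib]
  ring_nf

theorem setIntegral_neg_add_setIntegral_pos (he : Measurable e) (h0 : μ {ω | e ω = 0} = 0)
    {f : Ω → ℝ} (hf : Integrable f μ) :
    ∫ ω in {ω | e ω < 0}, f ω ∂μ + ∫ ω in {ω | 0 < e ω}, f ω ∂μ = ∫ ω, f ω ∂μ :=
  (integral_comp_regime (g := fun _ => f) he h0 fun _ => hf).symm

theorem measureReal_neg_add_measureReal_pos [IsProbabilityMeasure μ] (he : Measurable e)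
    (h0 : μ {ω | e ω = 0} = 0) : μ.real {ω | e ω < 0} + μ.real {ω | 0 < e ω} = 1 := by
  simpa using setIntegral_neg_add_setIntegral_pos he h0 (integrable_const (1 : ℝ))

end integral

/-- Let `p = n+1 ≥ 1`, `0 < r ≤ 2`, and `e` a real random variable
with `E(|e|^r) < ∞`, `P(e = 0) = 0` (so `e` is not almost surely `0`).  Set
`p₁ = P(e < 0)`, `p₂ = P(e > 0)`, `E₁ = E(|e|^r 1_{e<0})`, `E₂ = E(|e|^r 1_{e>0})`.
Let `b_{ji} > 0` and `b*(x) = (∑ b_{1i}² xᵢ²)^{1/2}` if `x₁ ≤ 0`,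
`b*(x) = (∑ b_{2i}² xᵢ²)^{1/2}` if `x₁ > 0`.  If
`b₁₁^r E₁ + b₂₁^r E₂ + ∑_{i=2}^p (b_{1i}^r p₁ + b_{2i}^r p₂) E(|e|^r) < 1`, then there
exist `β ∈ (0,1)` and positive `d_{ji}` such that, with
`V(x) = ∑ d_{1i}|xᵢ|^r` for `x₁ ≤ 0` and `V(x) = ∑ d_{2i}|xᵢ|^r` for `x₁ > 0`,
`E(V(b*(x)e, x₁,…,x_{p−1})) ≤ β V(x)` for all `x ∈ ℝ^p`.
(Indices `j = 1,2` are `Fin 2`; `i = 1,…,p` is `Fin (n+1)`.) -/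
theorem stmt17 {Ω : Type*} [MeasurableSpace Ω] (μ : Measure Ω) [IsProbabilityMeasure μ]
    (n : ℕ) (r : ℝ) (hr0 : 0 < r) (hr2 : r ≤ 2)
    (e : Ω → ℝ) (he : Measurable e) (hmom : Integrable (fun ω => |e ω| ^ r) μ)
    (h0 : μ {ω | e ω = 0} = 0)
    (b : Fin 2 → Fin (n + 1) → ℝ) (hb : ∀ j i, 0 < b j i)
    (p₁ p₂ E₁ E₂ : ℝ)
    (hp₁ : p₁ = (μ {ω | e ω < 0}).toReal) (hp₂ : p₂ = (μ {ω | 0 < e ω}).toReal)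
    (hE₁ : E₁ = ∫ ω in {ω | e ω < 0}, |e ω| ^ r ∂μ)
    (hE₂ : E₂ = ∫ ω in {ω | 0 < e ω}, |e ω| ^ r ∂μ)
    (bstar : (Fin (n + 1) → ℝ) → ℝ)
    (hbstar : ∀ x, bstar x = if x 0 ≤ 0 then Real.sqrt (∑ i, b 0 i ^ 2 * x i ^ 2)
      else Real.sqrt (∑ i, b 1 i ^ 2 * x i ^ 2))
    (hcond : b 0 0 ^ r * E₁ + b 1 0 ^ r * E₂
        + ∑ i : Fin n, (b 0 i.succ ^ r * p₁ + b 1 i.succ ^ r * p₂)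
            * ∫ ω, |e ω| ^ r ∂μ < 1) :
    ∃ β : ℝ, 0 < β ∧ β < 1 ∧
      ∃ d : Fin 2 → Fin (n + 1) → ℝ, (∀ j i, 0 < d j i) ∧
        ∀ x : Fin (n + 1) → ℝ,
          ∫ ω, (∑ i, d (if bstar x * e ω ≤ 0 then 0 else 1) i *
              |(Fin.cons (bstar x * e ω) (fun j : Fin n => x j.castSucc) :
                Fin (n + 1) → ℝ) i| ^ r) ∂μ
            ≤ β * ∑ i, d (if x 0 ≤ 0 then 0 else 1) i * |x i| ^ r := by
  have hp : p₁ + p₂ = 1 := hp₁ ▸ hp₂ ▸ measureReal_neg_add_measureReal_pos he h0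
  have hM : ∫ ω, |e ω| ^ r ∂μ = E₁ + E₂ :=
    hE₁ ▸ hE₂ ▸ (setIntegral_neg_add_setIntegral_pos he h0 hmom).symm
  obtain ⟨β, hβ0, hβ1, hβS⟩ := exists_pos_lt_one_lt_pow (hM ▸ hcond) (n + 1)
  set a : Fin 2 → Fin (n + 1) → ℝ := fun j i => b j i ^ r
  have ha : ∀ j i, 0 < a j i := fun j i => Real.rpow_pos_of_pos (hb j i) r
  have hp₁0 : 0 ≤ p₁ := hp₁ ▸ ENNReal.toReal_nonneg
  have hp₂0 : 0 ≤ p₂ := hp₂ ▸ ENNReal.toReal_nonneg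
  have hd := driftWeights_zero_average_le_one hβ0 hβ1.le (fun j i => (ha j i).le) hp₁0 hp₂0
    (hE₁ ▸ integral_nonneg fun _ => by positivity) (hE₂ ▸ integral_nonneg fun _ => by positivity)
    hβS.le
  refine ⟨β, hβ0, hβ1, driftWeights β p₁ p₂ a, driftWeights_pos hβ0 ha hp₁0 hp₂0, fun x => ?_⟩
  have hbx : bstar x = √(∑ i, b (regime (x 0)) i ^ 2 * x i ^ 2) :=
    (hbstar x).trans (apply_ite (fun j => √(∑ i, b j i ^ 2 * x i ^ 2)) _ _ _).symm
  rcases (Real.sqrt_nonneg (∑ i, b (regime (x 0)) i ^ 2 * x i ^ 2)).eq_or_lt with hs | hs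
  · obtain rfl := eq_zero_of_sqrt_sum_mul_sq_eq_zero (fun i => (hb _ i).ne') hs.symm
    simp [hbx, Fin.sum_univ_succ, Real.zero_rpow hr0.ne']
  · rw [← hbx] at hs
    show ∫ ω, switchingLyapunov _ r (Fin.cons (bstar x * e ω) (Fin.init x)) ∂μ
      ≤ β * switchingLyapunov _ r x
    rw [integral_switchingLyapunov_cons he h0 hmom _ _ hs, measureReal_def, measureReal_def,
      ← hp₁, ← hp₂, ← hE₁, ← hE₂]
    refine drift_le (v := fun i => |x i| ^ r) hβ0.ne' hp (regime (x 0)) (by positivity) ?_ hd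
    rw [hbx]
    exact Real.sqrt_sum_mul_sq_rpow_le _ (fun i _ => (hb _ i).le) x hr0 hr2
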